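/- arXiv:1803.05524 — 7 statements merged into one kernel-verified Lean document; each statement's English description precedes it below -/
import Mathlib

section
/- Assume property (C'_k): Im d_{-1/h} ∩ ker d_h = Im(d_h ∘ d_{-1/h}) and Im d_h ∩ ker d_{-1/h} = Im(d_h ∘ d_{-1/h}) in degree k. Then property (A'_k) holds: ker d_h ∩ ker d_{-1/h} ∩ (Im d_h + Im d_{-1/h}) = Im(d_h ∘ d_{-1/h}) in degree k. -/
/-! Both differentials vanish on `Im d_h + Im d_{-1/h}`, so by the modular law the left-hand side
splits as `(Im d_h ∩ ker d_{-1/h}) + (Im d_{-1/h} ∩ ker d_h)`, and (C'_k) identifies both summands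
with `Im (d_h ∘ d_{-1/h})`. -/

theorem inf_inf_sup_eq_of_le {α : Type*} [Lattice α] [IsModularLattice α] {a b p q : α}
    (ha : a ≤ p) (hb : b ≤ q) :
    p ⊓ q ⊓ (a ⊔ b) = a ⊓ q ⊔ b ⊓ p :=
  calc p ⊓ q ⊓ (a ⊔ b) = (b ⊔ a) ⊓ q ⊓ p := by rw [sup_comm]; ac_rfl
    _ = (b ⊔ a ⊓ q) ⊓ p := by rw [sup_inf_assoc_of_le a hb]
    _ = a ⊓ q ⊔ b ⊓ p := by rw [sup_comm, sup_inf_assoc_of_le b (inf_le_left.trans ha)]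

theorem stmt_6_general {V0 V1 V2 V3 : Type*}
    [AddCommGroup V0] [Module ℂ V0] [AddCommGroup V1] [Module ℂ V1]
    [AddCommGroup V2] [Module ℂ V2] [AddCommGroup V3] [Module ℂ V3]
    (D01 : V0 →ₗ[ℂ] V1) (d12 D12 : V1 →ₗ[ℂ] V2) (d23 D23 : V2 →ₗ[ℂ] V3)
    (hd2b : d23 ∘ₗ d12 = 0) (hD2b : D23 ∘ₗ D12 = 0)
    (hC1 : LinearMap.range D12 ⊓ LinearMap.ker d23 = LinearMap.range (d12 ∘ₗ D01))
    (hC2 : LinearMap.range d12 ⊓ LinearMap.ker D23 = LinearMap.range (d12 ∘ₗ D01)) :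
    LinearMap.ker d23 ⊓ LinearMap.ker D23
      ⊓ (LinearMap.range d12 ⊔ LinearMap.range D12)
      = LinearMap.range (d12 ∘ₗ D01) := by
  rw [inf_inf_sup_eq_of_le (LinearMap.range_le_ker_iff.mpr hd2b)
    (LinearMap.range_le_ker_iff.mpr hD2b), hC1, hC2, sup_idem]

/-- (C'_k) implies (A'_k). -/
theorem stmt_6 {V0 V1 V2 V3 : Type*}
    [AddCommGroup V0] [Module ℂ V0] [AddCommGroup V1] [Module ℂ V1]
    [AddCommGroup V2] [Module ℂ V2] [AddCommGroup V3] [Module ℂ V3]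
    (d01 D01 : V0 →ₗ[ℂ] V1) (d12 D12 : V1 →ₗ[ℂ] V2) (d23 D23 : V2 →ₗ[ℂ] V3)
    (hd2a : d12 ∘ₗ d01 = 0) (hd2b : d23 ∘ₗ d12 = 0)
    (hD2a : D12 ∘ₗ D01 = 0) (hD2b : D23 ∘ₗ D12 = 0)
    (hanti1 : d12 ∘ₗ D01 + D12 ∘ₗ d01 = 0)
    (hanti2 : d23 ∘ₗ D12 + D23 ∘ₗ d12 = 0)
    (hC1 : LinearMap.range D12 ⊓ LinearMap.ker d23 = LinearMap.range (d12 ∘ₗ D01))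
    (hC2 : LinearMap.range d12 ⊓ LinearMap.ker D23 = LinearMap.range (d12 ∘ₗ D01)) :
    LinearMap.ker d23 ⊓ LinearMap.ker D23
      ⊓ (LinearMap.range d12 ⊔ LinearMap.range D12)
      = LinearMap.range (d12 ∘ₗ D01) :=
  stmt_6_general D01 d12 D12 d23 D23 hd2b hD2b hC1 hC2
end

section
/- Assume property (C'_k): Im d_{-1/h} ∩ ker d_h = Im(d_h ∘ d_{-1/h}) and Im d_h ∩ ker d_{-1/h} = Im(d_h ∘ d_{-1/h}) in degree k. Then property (D'_{k-1}) holds: Im d_h + ker d_{-1/h} = ker(d_h ∘ d_{-1/h}) and Im d_{-1/h} + ker d_h = ker(d_h ∘ d_{-1/h}) in degree k-1. -/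
/-! Both identities are instances of one fact about a composable triple `f`, `g`, `a`: pulling
back along `g` turns `range (g ∘ f) = map g (range f)` into `range f ⊔ ker g`, so the hypothesis
`range g ⊓ ker a = range (g ∘ f)` yields `range f ⊔ ker g = ker (a ∘ g)`. Anticommutation lets
one trade `d_h d_{-1/h}` for `-d_{-1/h} d_h`, which puts both halves of (C'_k) into this shape. -/

namespace LinearMap

variable {R U V W X : Type*} [Ring R] [AddCommGroup U] [Module R U] [AddCommGroup V] [Module R V]
  [AddCommGroup W] [Module R W] [AddCommGroup X] [Module R X]

theorem range_sup_ker_eq_ker_comp {f : U →ₗ[R] V} {g : V →ₗ[R] W} {a : W →ₗ[R] X}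
    (h : range g ⊓ ker a = range (g ∘ₗ f)) : range f ⊔ ker g = ker (a ∘ₗ g) := by
  calc range f ⊔ ker g = (range (g ∘ₗ f)).comap g := by
        rw [range_comp, Submodule.comap_map_eq]
    _ = (range g ⊓ ker a).comap g := by rw [h]
    _ = ker (a ∘ₗ g) := by
        rw [Submodule.comap_inf, range_le_iff_comap.mp le_rfl, top_inf_eq, ker_comp]

end LinearMap

theorem stmt_7_general {V0 V1 V2 V3 : Type*}
    [AddCommGroup V0] [Module ℂ V0] [AddCommGroup V1] [Module ℂ V1]
    [AddCommGroup V2] [Module ℂ V2] [AddCommGroup V3] [Module ℂ V3]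
    (d01 D01 : V0 →ₗ[ℂ] V1) (d12 D12 : V1 →ₗ[ℂ] V2) (d23 D23 : V2 →ₗ[ℂ] V3)
    (hanti1 : d12 ∘ₗ D01 + D12 ∘ₗ d01 = 0)
    (hanti2 : d23 ∘ₗ D12 + D23 ∘ₗ d12 = 0)
    (hC1 : LinearMap.range D12 ⊓ LinearMap.ker d23 = LinearMap.range (d12 ∘ₗ D01))
    (hC2 : LinearMap.range d12 ⊓ LinearMap.ker D23 = LinearMap.range (d12 ∘ₗ D01)) :
    LinearMap.range d01 ⊔ LinearMap.ker D12 = LinearMap.ker (d23 ∘ₗ D12) ∧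
    LinearMap.range D01 ⊔ LinearMap.ker d12 = LinearMap.ker (d23 ∘ₗ D12) := by
  have hC1' : LinearMap.range D12 ⊓ LinearMap.ker d23 = LinearMap.range (D12 ∘ₗ d01) := by
    rw [hC1, eq_neg_of_add_eq_zero_left hanti1, LinearMap.range_neg]
  refine ⟨LinearMap.range_sup_ker_eq_ker_comp hC1', ?_⟩
  rw [eq_neg_of_add_eq_zero_left hanti2, LinearMap.ker_neg]
  exact LinearMap.range_sup_ker_eq_ker_comp hC2

/-- (C'_k) implies (D'_{k-1}): Im d_h + ker d_{-1/h} = ker(d_h ∘ d_{-1/h}) and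
Im d_{-1/h} + ker d_h = ker(d_h ∘ d_{-1/h}) in degree k-1 (the space V1). -/
theorem stmt_7 {V0 V1 V2 V3 : Type*}
    [AddCommGroup V0] [Module ℂ V0] [AddCommGroup V1] [Module ℂ V1]
    [AddCommGroup V2] [Module ℂ V2] [AddCommGroup V3] [Module ℂ V3]
    (d01 D01 : V0 →ₗ[ℂ] V1) (d12 D12 : V1 →ₗ[ℂ] V2) (d23 D23 : V2 →ₗ[ℂ] V3)
    (hd2a : d12 ∘ₗ d01 = 0) (hd2b : d23 ∘ₗ d12 = 0)
    (hD2a : D12 ∘ₗ D01 = 0) (hD2b : D23 ∘ₗ D12 = 0)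
    (hanti1 : d12 ∘ₗ D01 + D12 ∘ₗ d01 = 0)
    (hanti2 : d23 ∘ₗ D12 + D23 ∘ₗ d12 = 0)
    (hC1 : LinearMap.range D12 ⊓ LinearMap.ker d23 = LinearMap.range (d12 ∘ₗ D01))
    (hC2 : LinearMap.range d12 ⊓ LinearMap.ker D23 = LinearMap.range (d12 ∘ₗ D01)) :
    LinearMap.range d01 ⊔ LinearMap.ker D12 = LinearMap.ker (d23 ∘ₗ D12) ∧
    LinearMap.range D01 ⊔ LinearMap.ker d12 = LinearMap.ker (d23 ∘ₗ D12) :=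
  stmt_7_general d01 D01 d12 D12 d23 D23 hanti1 hanti2 hC1 hC2
end

section
/- Assume property (D'_{k-1}): Im d_h + ker d_{-1/h} = ker(d_h ∘ d_{-1/h}) and Im d_{-1/h} + ker d_h = ker(d_h ∘ d_{-1/h}) in degree k-1. Then property (C'_k) holds: Im d_{-1/h} ∩ ker d_h = Im(d_h ∘ d_{-1/h}) and Im d_h ∩ ker d_{-1/h} = Im(d_h ∘ d_{-1/h}) in degree k. -/
/- `range f ⊓ ker g` is the image under `f` of `ker (g ∘ f)`; the hypothesis splits that kernel
into `range e` and a part that `f` kills. -/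
theorem LinearMap.range_inf_ker_eq_range_comp {R M N P Q : Type*} [Semiring R]
    [AddCommMonoid M] [Module R M] [AddCommMonoid N] [Module R N]
    [AddCommMonoid P] [Module R P] [AddCommMonoid Q] [Module R Q]
    {e : M →ₗ[R] N} {f : N →ₗ[R] P} {g : P →ₗ[R] Q}
    (h : LinearMap.range e ⊔ LinearMap.ker f = LinearMap.ker (g ∘ₗ f)) :
    LinearMap.range f ⊓ LinearMap.ker g = LinearMap.range (f ∘ₗ e) := by
  rw [← Submodule.map_comap_eq, ← LinearMap.ker_comp, ← h, Submodule.map_sup,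
    LinearMap.le_ker_iff_map.mp le_rfl, sup_bot_eq, LinearMap.range_comp]

theorem stmt_8_general {V0 V1 V2 V3 : Type*}
    [AddCommGroup V0] [Module ℂ V0] [AddCommGroup V1] [Module ℂ V1]
    [AddCommGroup V2] [Module ℂ V2] [AddCommGroup V3] [Module ℂ V3]
    (d01 D01 : V0 →ₗ[ℂ] V1) (d12 D12 : V1 →ₗ[ℂ] V2) (d23 D23 : V2 →ₗ[ℂ] V3)
    (hanti1 : d12 ∘ₗ D01 + D12 ∘ₗ d01 = 0)
    (hanti2 : d23 ∘ₗ D12 + D23 ∘ₗ d12 = 0)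
    (hD1 : LinearMap.range d01 ⊔ LinearMap.ker D12 = LinearMap.ker (d23 ∘ₗ D12))
    (hD2 : LinearMap.range D01 ⊔ LinearMap.ker d12 = LinearMap.ker (d23 ∘ₗ D12)) :
    LinearMap.range D12 ⊓ LinearMap.ker d23 = LinearMap.range (d12 ∘ₗ D01) ∧
    LinearMap.range d12 ⊓ LinearMap.ker D23 = LinearMap.range (d12 ∘ₗ D01) := by
  have hD12d01 : D12 ∘ₗ d01 = -(d12 ∘ₗ D01) := eq_neg_of_add_eq_zero_right hanti1
  have hD23d12 : D23 ∘ₗ d12 = -(d23 ∘ₗ D12) := eq_neg_of_add_eq_zero_right hanti2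
  constructor
  · rw [LinearMap.range_inf_ker_eq_range_comp hD1, hD12d01, LinearMap.range_neg]
  · refine LinearMap.range_inf_ker_eq_range_comp ?_
    rw [hD23d12, LinearMap.ker_neg, hD2]

/-- (D'_{k-1}) implies (C'_k). -/
theorem stmt_8 {V0 V1 V2 V3 : Type*}
    [AddCommGroup V0] [Module ℂ V0] [AddCommGroup V1] [Module ℂ V1]
    [AddCommGroup V2] [Module ℂ V2] [AddCommGroup V3] [Module ℂ V3]
    (d01 D01 : V0 →ₗ[ℂ] V1) (d12 D12 : V1 →ₗ[ℂ] V2) (d23 D23 : V2 →ₗ[ℂ] V3)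
    (hd2a : d12 ∘ₗ d01 = 0) (hd2b : d23 ∘ₗ d12 = 0)
    (hD2a : D12 ∘ₗ D01 = 0) (hD2b : D23 ∘ₗ D12 = 0)
    (hanti1 : d12 ∘ₗ D01 + D12 ∘ₗ d01 = 0)
    (hanti2 : d23 ∘ₗ D12 + D23 ∘ₗ d12 = 0)
    (hD1 : LinearMap.range d01 ⊔ LinearMap.ker D12 = LinearMap.ker (d23 ∘ₗ D12))
    (hD2 : LinearMap.range D01 ⊔ LinearMap.ker d12 = LinearMap.ker (d23 ∘ₗ D12)) :
    LinearMap.range D12 ⊓ LinearMap.ker d23 = LinearMap.range (d12 ∘ₗ D01) ∧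
    LinearMap.range d12 ⊓ LinearMap.ker D23 = LinearMap.range (d12 ∘ₗ D01) :=
  stmt_8_general d01 D01 d12 D12 d23 D23 hanti1 hanti2 hD1 hD2
end

section
/- Assume property (D'_{k-1}): Im d_h + ker d_{-1/h} = ker(d_h ∘ d_{-1/h}) and Im d_{-1/h} + ker d_h = ker(d_h ∘ d_{-1/h}) in degree k-1. Then property (B'_{k-1}) holds: Im d_h + Im d_{-1/h} + (ker d_h ∩ ker d_{-1/h}) = ker(d_h ∘ d_{-1/h}) in degree k-1. -/
/-! Two applications of the modular law in the lattice of submodules: since `Im D ≤ K = Im D ⊔ ker d`,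
`K = Im D ⊔ (ker d ⊓ K)`, and since `Im d ≤ ker d`, `ker d ⊓ (Im d ⊔ ker D) = Im d ⊔ (ker d ⊓ ker D)`. -/

theorem sup_sup_inf_eq_of_sup_eq {α : Type*} [Lattice α] [IsModularLattice α] {a b c e k : α}
    (hac : a ⊔ c = k) (hbe : b ⊔ e = k) (hae : a ≤ e) : a ⊔ b ⊔ e ⊓ c = k := by
  have hbk : b ≤ k := hbe ▸ le_sup_left
  calc a ⊔ b ⊔ e ⊓ c = b ⊔ (a ⊔ c ⊓ e) := by rw [inf_comm, sup_comm a b, sup_assoc]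
    _ = b ⊔ (a ⊔ c) ⊓ e := by rw [sup_inf_assoc_of_le c hae]
    _ = b ⊔ e ⊓ k := by rw [hac, inf_comm]
    _ = (b ⊔ e) ⊓ k := (sup_inf_assoc_of_le e hbk).symm
    _ = k := by rw [hbe, inf_idem]

theorem stmt_9_general {V0 V1 V2 V3 : Type*}
    [AddCommGroup V0] [Module ℂ V0] [AddCommGroup V1] [Module ℂ V1]
    [AddCommGroup V2] [Module ℂ V2] [AddCommGroup V3] [Module ℂ V3]
    (d01 D01 : V0 →ₗ[ℂ] V1) (d12 D12 : V1 →ₗ[ℂ] V2) (d23 : V2 →ₗ[ℂ] V3)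
    (hd2a : d12 ∘ₗ d01 = 0)
    (hD1 : LinearMap.range d01 ⊔ LinearMap.ker D12 = LinearMap.ker (d23 ∘ₗ D12))
    (hD2 : LinearMap.range D01 ⊔ LinearMap.ker d12 = LinearMap.ker (d23 ∘ₗ D12)) :
    LinearMap.range d01 ⊔ LinearMap.range D01 ⊔ (LinearMap.ker d12 ⊓ LinearMap.ker D12)
      = LinearMap.ker (d23 ∘ₗ D12) :=
  sup_sup_inf_eq_of_sup_eq hD1 hD2 (LinearMap.range_le_ker_iff.mpr hd2a)

/-- (D'_{k-1}) implies (B'_{k-1}): Im d_h + Im d_{-1/h} + (ker d_h ∩ ker d_{-1/h})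
= ker(d_h ∘ d_{-1/h}) in degree k-1 (the space V1). -/
theorem stmt_9 {V0 V1 V2 V3 : Type*}
    [AddCommGroup V0] [Module ℂ V0] [AddCommGroup V1] [Module ℂ V1]
    [AddCommGroup V2] [Module ℂ V2] [AddCommGroup V3] [Module ℂ V3]
    (d01 D01 : V0 →ₗ[ℂ] V1) (d12 D12 : V1 →ₗ[ℂ] V2) (d23 D23 : V2 →ₗ[ℂ] V3)
    (hd2a : d12 ∘ₗ d01 = 0) (hd2b : d23 ∘ₗ d12 = 0)
    (hD2a : D12 ∘ₗ D01 = 0) (hD2b : D23 ∘ₗ D12 = 0)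
    (hanti1 : d12 ∘ₗ D01 + D12 ∘ₗ d01 = 0)
    (hanti2 : d23 ∘ₗ D12 + D23 ∘ₗ d12 = 0)
    (hD1 : LinearMap.range d01 ⊔ LinearMap.ker D12 = LinearMap.ker (d23 ∘ₗ D12))
    (hD2 : LinearMap.range D01 ⊔ LinearMap.ker d12 = LinearMap.ker (d23 ∘ₗ D12)) :
    LinearMap.range d01 ⊔ LinearMap.range D01 ⊔ (LinearMap.ker d12 ⊓ LinearMap.ker D12)
      = LinearMap.ker (d23 ∘ₗ D12) :=
  stmt_9_general d01 D01 d12 D12 d23 hd2a hD1 hD2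
end

section
/- Suppose that in degree k the following holds: for every u ∈ ker d_h ∩ ker d_{-1/h}, if u ∈ Im d_h or u ∈ Im d_{-1/h}, then u ∈ Im(d_h ∘ d_{-1/h}). Then for every u ∈ ker d_h ∩ ker d_{-1/h} in degree k with u ∈ Im d, one also has u ∈ Im(d_h ∘ d_{-1/h}), where d := ((h+1)/(h²+1))·d_h + (h(h-1)/(h²+1))·d_{-1/h}. -/
/-!
Write `u = a • d v + b • D v`. If `b = 0`, then `u` is already `d`-exact. Otherwise, applying
`d'` to `u` kills `d'(d v)` and leaves `b • d'(D v) = 0`, so `d'(D v) = 0`, and by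
anticommutation also `D'(d v) = 0`. Hence `d v` and `D v` are both closed for `d'` and `D'`,
and exact for `d` resp. `D`, so each lies in the target submodule by hypothesis, and so does `u`.
-/

section

variable {K V1 V2 V3 : Type*} [Field K] [AddCommGroup V1] [Module K V1]
  [AddCommGroup V2] [Module K V2] [AddCommGroup V3] [Module K V3]
  {d D : V1 →ₗ[K] V2} {d' D' : V2 →ₗ[K] V3}

theorem LinearMap.apply_eq_zero_of_apply_smul_add_smul_eq_zero (hdd : d' ∘ₗ d = 0)
    {a b : K} (hb : b ≠ 0) {v : V1} (hv : d' (a • d v + b • D v) = 0) : d' (D v) = 0 := by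
  have hddv : d' (d v) = 0 := LinearMap.congr_fun hdd v
  rw [map_add, map_smul, map_smul, hddv, smul_zero, zero_add] at hv
  exact (smul_eq_zero.mp hv).resolve_left hb

theorem LinearMap.mem_of_mem_range_smul_add_smul (P : Submodule K V2)
    (hdd : d' ∘ₗ d = 0) (hDD : D' ∘ₗ D = 0) (hanti : d' ∘ₗ D + D' ∘ₗ d = 0)
    (hP : ∀ u : V2, d' u = 0 → D' u = 0 → (u ∈ range d ∨ u ∈ range D) → u ∈ P)
    (a b : K) {u : V2} (hd'u : d' u = 0) (hD'u : D' u = 0) (hu : u ∈ range (a • d + b • D)) :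
    u ∈ P := by
  obtain ⟨v, rfl⟩ := hu
  rcases eq_or_ne b 0 with rfl | hb
  · exact hP _ hd'u hD'u (Or.inl ⟨a • v, by simp⟩)
  have hd'Dv : d' (D v) = 0 :=
    apply_eq_zero_of_apply_smul_add_smul_eq_zero hdd hb (by simpa using hd'u)
  have hD'dv : D' (d v) = 0 := by
    simpa [hd'Dv] using LinearMap.congr_fun hanti v
  have hdv : d v ∈ P := hP _ (LinearMap.congr_fun hdd v) hD'dv (Or.inl ⟨v, rfl⟩)
  have hDv : D v ∈ P := hP _ hd'Dv (LinearMap.congr_fun hDD v) (Or.inr ⟨v, rfl⟩)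
  simpa using P.add_mem (P.smul_mem a hdv) (P.smul_mem b hDv)

end

theorem stmt_11_general {V0 V1 V2 V3 : Type*}
    [AddCommGroup V0] [Module ℂ V0] [AddCommGroup V1] [Module ℂ V1]
    [AddCommGroup V2] [Module ℂ V2] [AddCommGroup V3] [Module ℂ V3]
    (D01 : V0 →ₗ[ℂ] V1) (d12 D12 : V1 →ₗ[ℂ] V2) (d23 D23 : V2 →ₗ[ℂ] V3)
    (hd2b : d23 ∘ₗ d12 = 0)
    (hD2b : D23 ∘ₗ D12 = 0)
    (hanti2 : d23 ∘ₗ D12 + D23 ∘ₗ d12 = 0)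
    (h : ℝ)
    (hyp : ∀ u : V2, d23 u = 0 → D23 u = 0 →
      (u ∈ LinearMap.range d12 ∨ u ∈ LinearMap.range D12) →
      u ∈ LinearMap.range (d12 ∘ₗ D01)) :
    ∀ u : V2, d23 u = 0 → D23 u = 0 →
      u ∈ LinearMap.range ((((h + 1) / (h ^ 2 + 1) : ℝ) : ℂ) • d12
          + ((h * (h - 1) / (h ^ 2 + 1) : ℝ) : ℂ) • D12) →
      u ∈ LinearMap.range (d12 ∘ₗ D01) :=
  fun _ hd23u hD23u hu =>
    LinearMap.mem_of_mem_range_smul_add_smul _ hd2b hD2b hanti2 hyp _ _ hd23u hD23u hu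

/-- If in degree k every u ∈ ker d_h ∩ ker d_{-1/h} that is d_h- or d_{-1/h}-exact is
(d_h d_{-1/h})-exact, then every such u that is d-exact is also (d_h d_{-1/h})-exact,
where d = ((h+1)/(h²+1))·d_h + (h(h-1)/(h²+1))·d_{-1/h}. -/
theorem stmt_11 {V0 V1 V2 V3 : Type*}
    [AddCommGroup V0] [Module ℂ V0] [AddCommGroup V1] [Module ℂ V1]
    [AddCommGroup V2] [Module ℂ V2] [AddCommGroup V3] [Module ℂ V3]
    (d01 D01 : V0 →ₗ[ℂ] V1) (d12 D12 : V1 →ₗ[ℂ] V2) (d23 D23 : V2 →ₗ[ℂ] V3)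
    (hd2a : d12 ∘ₗ d01 = 0) (hd2b : d23 ∘ₗ d12 = 0)
    (hD2a : D12 ∘ₗ D01 = 0) (hD2b : D23 ∘ₗ D12 = 0)
    (hanti1 : d12 ∘ₗ D01 + D12 ∘ₗ d01 = 0)
    (hanti2 : d23 ∘ₗ D12 + D23 ∘ₗ d12 = 0)
    (h : ℝ) (hh : h ≠ 0)
    (hyp : ∀ u : V2, d23 u = 0 → D23 u = 0 →
      (u ∈ LinearMap.range d12 ∨ u ∈ LinearMap.range D12) →
      u ∈ LinearMap.range (d12 ∘ₗ D01)) :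
    ∀ u : V2, d23 u = 0 → D23 u = 0 →
      u ∈ LinearMap.range ((((h + 1) / (h ^ 2 + 1) : ℝ) : ℂ) • d12
          + ((h * (h - 1) / (h ^ 2 + 1) : ℝ) : ℂ) • D12) →
      u ∈ LinearMap.range (d12 ∘ₗ D01) :=
  stmt_11_general D01 d12 D12 d23 D23 hd2b hD2b hanti2 h hyp
end

section
/- On a compact Hermitian manifold, suppose both Laplace-type operators Δ_h = d_h d_h* + d_h* d_h and Δ_{-1/h} are equal up to a positive scalar (Δ_h = h²·Δ_{-1/h}, as holds when the metric is Kähler), so that ker Δ_h = ker Δ_{-1/h}, and suppose d_h anticommutes with both d_{-1/h} and d_{-1/h}*. If u is a form with u ∈ ker d_h ∩ ker d_{-1/h} and u = d_h v for some v, then u ∈ Im(d_h ∘ d_{-1/h}). (Abstract Hodge-theoretic version of the h-∂∂̄-lemma.) -/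
/-!
Decompose `v = v₀ + D u₁ + D* u₂` with `v₀` harmonic. Harmonic forms are `d`-closed, so
`u = d v = d D u₁ + d D* u₂`. Since `d` anticommutes with `D` and `D*`, the first summand is
`D`-closed and the second lies in `Im D*`; as `D u = 0`, the second is also `D`-closed, hence
orthogonal to itself, hence zero.
-/

theorem LinearMap.apply_apply_eq_neg_of_comp_add_comp_eq_zero {R M : Type*} [Ring R]
    [AddCommGroup M] [Module R M] {f g : M →ₗ[R] M} (h : f ∘ₗ g + g ∘ₗ f = 0) (x : M) :
    f (g x) = -g (f x) :=
  eq_neg_of_add_eq_zero_left (by simpa using LinearMap.congr_fun h x)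

theorem eq_zero_of_apply_eq_zero_of_eq_apply {𝕜 V : Type*} [RCLike 𝕜] [NormedAddCommGroup V]
    [InnerProductSpace 𝕜 V] {D Ds : V →ₗ[𝕜] V}
    (horth : ∀ x y : V, D x = 0 → (inner 𝕜 x (Ds y) : 𝕜) = 0) {x y : V} (hx : D x = 0)
    (hy : x = Ds y) : x = 0 := by
  have hself := horth x y hx
  rw [← hy] at hself
  exact inner_self_eq_zero.mp hself

theorem stmt_15_general {V : Type*} [NormedAddCommGroup V] [InnerProductSpace ℂ V]
    (d D ds Ds : V →ₗ[ℂ] V)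
    (hD2 : D ∘ₗ D = 0)
    (hdecomp : ∀ v : V, ∃ v0 u1 u2 : V,
      (D ∘ₗ Ds + Ds ∘ₗ D) v0 = 0 ∧ v = v0 + D u1 + Ds u2)
    (hker1 : LinearMap.ker (D ∘ₗ Ds + Ds ∘ₗ D) = LinearMap.ker (d ∘ₗ ds + ds ∘ₗ d))
    (hker2 : LinearMap.ker (d ∘ₗ ds + ds ∘ₗ d) = LinearMap.ker d ⊓ LinearMap.ker ds)
    (hanti1 : d ∘ₗ D + D ∘ₗ d = 0) (hanti2 : d ∘ₗ Ds + Ds ∘ₗ d = 0)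
    (horth : ∀ x y : V, D x = 0 → (inner ℂ x (Ds y) : ℂ) = 0) :
    ∀ u v : V, d u = 0 → D u = 0 → u = d v → ∃ w : V, u = d (D w) := by
  intro u v _ hDu rfl
  obtain ⟨v0, u1, u2, hv0, rfl⟩ := hdecomp v
  have hdv0 : d v0 = 0 := by
    have hmem : v0 ∈ LinearMap.ker d ⊓ LinearMap.ker ds := hker2 ▸ hker1 ▸ hv0
    exact hmem.1
  have hDdD : D (d (D u1)) = 0 := by
    rw [LinearMap.apply_apply_eq_neg_of_comp_add_comp_eq_zero hanti1, map_neg,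
      ← LinearMap.comp_apply, hD2, LinearMap.zero_apply, neg_zero]
  have hdDs : d (Ds u2) = Ds (-d u2) := by
    rw [map_neg, LinearMap.apply_apply_eq_neg_of_comp_add_comp_eq_zero hanti2]
  have hDdDs : D (d (Ds u2)) = 0 := by
    simpa only [map_add, hdv0, hDdD, map_zero, zero_add] using hDu
  have hdDs0 : d (Ds u2) = 0 := eq_zero_of_apply_eq_zero_of_eq_apply horth hDdDs hdDs
  exact ⟨u1, by rw [map_add, map_add, hdv0, hdDs0, zero_add, add_zero]⟩

/-- Abstract Hodge-theoretic h-∂∂̄-lemma: with d = d_h, D = d_{-1/h}, adjoints ds, Ds,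
assume the orthogonal three-space decomposition w.r.t. Δ_{-1/h}, the equality of kernels
ker Δ_{-1/h} = ker Δ_h = ker d_h ∩ ker d_h*, the anticommutations, and ker d_{-1/h} ⊥
Im d_{-1/h}*. Then any u ∈ ker d_h ∩ ker d_{-1/h} with u = d_h v lies in
Im(d_h ∘ d_{-1/h}). -/
theorem stmt_15 {V : Type*} [NormedAddCommGroup V] [InnerProductSpace ℂ V]
    (d D ds Ds : V →ₗ[ℂ] V)
    (hd2 : d ∘ₗ d = 0) (hD2 : D ∘ₗ D = 0)
    (hdecomp : ∀ v : V, ∃ v0 u1 u2 : V,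
      (D ∘ₗ Ds + Ds ∘ₗ D) v0 = 0 ∧ v = v0 + D u1 + Ds u2)
    (hker1 : LinearMap.ker (D ∘ₗ Ds + Ds ∘ₗ D) = LinearMap.ker (d ∘ₗ ds + ds ∘ₗ d))
    (hker2 : LinearMap.ker (d ∘ₗ ds + ds ∘ₗ d) = LinearMap.ker d ⊓ LinearMap.ker ds)
    (hanti1 : d ∘ₗ D + D ∘ₗ d = 0) (hanti2 : d ∘ₗ Ds + Ds ∘ₗ d = 0)
    (horth : ∀ x y : V, D x = 0 → (inner ℂ x (Ds y) : ℂ) = 0) :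
    ∀ u v : V, d u = 0 → D u = 0 → u = d v → ∃ w : V, u = d (D w) :=
  stmt_15_general d D ds Ds hD2 hdecomp hker1 hker2 hanti1 hanti2 horth
end

section
/- Let X be a compact complex manifold with dim_ℂ X = n satisfying: for every k and every k-form u ∈ ker d_h ∩ ker d_{-1/h}, u ∈ Im d_h implies u ∈ Im(d_h d_{-1/h}) = Im(∂∂̄) (the h-∂∂̄-property, h ≠ 0). Then the Frölicher spectral sequence of X degenerates at E₁; in particular, the differentials d₁ : E_1^{p,q}(X) → E_1^{p+1,q}(X) vanish identically, since for any ∂̄-closed (p,q)-form α one has ∂α = d_h(h^{-1}α) ∈ Im d_h ∩ ker d_h ∩ ker d_{-1/h}, whence ∂α ∈ Im(∂∂̄) ⊆ Im ∂̄. -/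
/-!
Since `∂̄α = 0`, the form `∂α = d_h(h⁻¹α)` is `d_h`-exact and closed for every `d_c = c∂ + ∂̄`,
so the h-∂∂̄-property gives `∂α = ∂∂̄w` for some form `w`. As `∂∂̄` raises the bidegree by
`(1, 1)` and `∂α` has pure bidegree `(p + 1, q)`, `w` may be replaced by its `(p, q - 1)`
component.
-/

namespace DirectSum

variable {ι R M N : Type*} [DecidableEq ι] [Add ι] [IsRightCancelAdd ι] [Semiring R]
  [AddCommMonoid M] [Module R M] [AddCommMonoid N] [Module R N]
  (ℳ : ι → Submodule R M) (𝒩 : ι → Submodule R N) [Decomposition ℳ] [Decomposition 𝒩]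
  (f : M →ₗ[R] N) (d : ι)

theorem coe_decompose_apply_of_map_le (hf : ∀ i, (ℳ i).map f ≤ 𝒩 (i + d)) (m : M) (i : ι) :
    (decompose 𝒩 (f m) (i + d) : N) = f (decompose ℳ m i) := by
  induction m using Decomposition.inductionOn ℳ with
  | zero => simp
  | @homogeneous j m =>
    have hfm : f m ∈ 𝒩 (j + d) := hf j (Submodule.mem_map_of_mem m.2)
    rw [decompose_coe]
    by_cases hji : j = i
    · subst hji
      rw [decompose_of_mem_same _ hfm, of_eq_same]
    · rw [decompose_of_mem_ne _ hfm (mt add_right_cancel hji), of_eq_of_ne _ _ _ (Ne.symm hji),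
        ZeroMemClass.coe_zero, map_zero]
  | add m m' hm hm' =>
    rw [map_add, decompose_add, decompose_add, add_apply, add_apply, Submodule.coe_add,
      Submodule.coe_add, hm, hm', map_add]

theorem exists_mem_apply_eq_of_apply_mem (hf : ∀ i, (ℳ i).map f ≤ 𝒩 (i + d)) {m : M} {i : ι}
    (hm : f m ∈ 𝒩 (i + d)) : ∃ u ∈ ℳ i, f u = f m :=
  ⟨_, (decompose ℳ m i).2, by
    rw [← coe_decompose_apply_of_map_le ℳ 𝒩 f d hf, decompose_of_mem_same _ hm]⟩

end DirectSum

/-- `M` is the space of all forms, `G p q` the `(p, q)`-forms, `P = ∂` and `Q = ∂̄`. -/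
theorem stmt_19_general {M : Type*} [AddCommGroup M] [Module ℂ M]
    (G : ℤ → ℤ → Submodule ℂ M)
    (P Q : M →ₗ[ℂ] M) (h : ℝ) (hh : h ≠ 0)
    (hGP : ∀ p q : ℤ, (G p q).map P ≤ G (p + 1) q)
    (hGQ : ∀ p q : ℤ, (G p q).map Q ≤ G p (q + 1))
    (hP2 : P ∘ₗ P = 0) (hPQ : P ∘ₗ Q + Q ∘ₗ P = 0)
    (hindep : iSupIndep (fun pq : ℤ × ℤ => G pq.1 pq.2))
    (htop : (⨆ pq : ℤ × ℤ, G pq.1 pq.2) = ⊤)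
    (hddbar : ∀ (k : ℤ) (u : M), u ∈ (⨆ p : ℤ, G p (k - p)) →
      ((h : ℂ) • P + Q) u = 0 → (((-1 / h : ℝ) : ℂ) • P + Q) u = 0 →
      u ∈ LinearMap.range ((h : ℂ) • P + Q) →
      ∃ w : M, P (Q w) = u) :
    ∀ (p q : ℤ) (α : M), α ∈ G p q → Q α = 0 →
      ∃ u ∈ G p (q - 1), P α = Q (P u) := by
  intro p q α hα hQα
  have hQP (m : M) : Q (P m) = -P (Q m) :=
    eq_neg_of_add_eq_zero_right (LinearMap.congr_fun hPQ m)
  have hPα : P α ∈ G (p + 1) q := hGP p q (Submodule.mem_map_of_mem hα)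
  have hPα_closed (c : ℂ) : (c • P + Q) (P α) = 0 := by
    have hPPα : P (P α) = 0 := LinearMap.congr_fun hP2 α
    simp [hQP, hQα, hPPα]
  have hPα_exact : P α = ((h : ℂ) • P + Q) ((h : ℂ)⁻¹ • α) := by
    rw [LinearMap.add_apply, LinearMap.smul_apply, map_smul, map_smul, hQα, smul_zero, add_zero,
      smul_smul, mul_inv_cancel₀ (Complex.ofReal_ne_zero.mpr hh), one_smul]
  obtain ⟨w, hw⟩ := hddbar (p + q + 1) (P α)
    (Submodule.mem_iSup_of_mem (p + 1) (by rwa [show p + q + 1 - (p + 1) = q by ring]))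
    (hPα_closed _) (hPα_closed _) ⟨_, hPα_exact.symm⟩
  let 𝒢 : ℤ × ℤ → Submodule ℂ M := fun pq => G pq.1 pq.2
  let _ :=
    (DirectSum.isInternal_submodule_of_iSupIndep_of_iSup_eq_top hindep htop).chooseDecomposition
  have hPQ_deg (i : ℤ × ℤ) : (𝒢 i).map (P ∘ₗ Q) ≤ 𝒢 (i + (1, 1)) := by
    rw [Submodule.map_comp]
    exact (Submodule.map_mono (hGQ _ _)).trans (hGP _ _)
  obtain ⟨u, hu, hPQu⟩ := DirectSum.exists_mem_apply_eq_of_apply_mem 𝒢 𝒢 _ _ hPQ_deg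
    (m := w) (i := (p, q - 1)) (by simpa [𝒢, hw] using hPα)
  refine ⟨-u, neg_mem hu, ?_⟩
  simpa [hQP, hw] using hPQu.symm

/-- h-∂∂̄-manifolds have E₁-degenerate Frölicher spectral sequence. Abstract formulation:
M is the space of all smooth forms, G p q the subspace of pure (p,q)-forms (an
independent grading with total space M), P = ∂ and Q = ∂̄, and d_h = h∂ + ∂̄. The
h-∂∂̄-hypothesis is imposed on forms of pure total degree k, i.e. elements of
⨆ p, G p (k-p). Conclusion: for every ∂̄-closed pure-type form α of bidegree (p,q),
∂α = ∂̄∂u for some u of bidegree (p,q-1); in particular ∂α ∈ Im ∂̄, i.e. the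
differentials d₁ of the Frölicher spectral sequence vanish identically. -/
theorem stmt_19 {M : Type*} [AddCommGroup M] [Module ℂ M]
    (G : ℤ → ℤ → Submodule ℂ M)
    (P Q : M →ₗ[ℂ] M) (h : ℝ) (hh : h ≠ 0)
    (hGP : ∀ p q : ℤ, (G p q).map P ≤ G (p + 1) q)
    (hGQ : ∀ p q : ℤ, (G p q).map Q ≤ G p (q + 1))
    (hP2 : P ∘ₗ P = 0) (hQ2 : Q ∘ₗ Q = 0) (hPQ : P ∘ₗ Q + Q ∘ₗ P = 0)
    (hindep : iSupIndep (fun pq : ℤ × ℤ => G pq.1 pq.2))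
    (htop : (⨆ pq : ℤ × ℤ, G pq.1 pq.2) = ⊤)
    (hddbar : ∀ (k : ℤ) (u : M), u ∈ (⨆ p : ℤ, G p (k - p)) →
      ((h : ℂ) • P + Q) u = 0 → (((-1 / h : ℝ) : ℂ) • P + Q) u = 0 →
      u ∈ LinearMap.range ((h : ℂ) • P + Q) →
      ∃ w : M, P (Q w) = u) :
    ∀ (p q : ℤ) (α : M), α ∈ G p q → Q α = 0 →
      ∃ u ∈ G p (q - 1), P α = Q (P u) :=
  stmt_19_general G P Q h hh hGP hGQ hP2 hPQ hindep htop hddbar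
end
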